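/- Let P be the uniform probability measure on the chord {(x,−1/2) : −√3/2 ≤ x ≤ √3/2} of the unit circle in ℝ², and let the constraint be the unit circle. Then the set {(cos θ₁, sin θ₁), (cos θ₂, sin θ₂)} with θ₁ = 2π − 2·arctan(√3/2 + √7/2) and θ₂ = π + 2·arctan(√3/2 + √7/2) is an optimal set of two points, and the second constrained quantization error is V_2 = (3 − √7)/2. -/

import Mathlib

open MeasureTheory Real Set

noncomputable section

abbrev E2 : Type := EuclideanSpace ℝ (Fin 2)

/-- The point `(x, y)` of the Euclidean plane. -/
def cpt (x y : ℝ) : E2 := WithLp.toLp 2 ![x, y]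

/-- Distortion error of `P` with respect to the set `α`: `∫ min_{a ∈ α} ‖x - a‖² dP(x)`. -/
def cDistortion (P : Measure E2) (α : Set E2) : ℝ :=
  ∫ x, (⨅ a : α, dist x (a : E2) ^ 2) ∂P

/-- The `n`th constrained quantization error of `P` with constraint set `S`. -/
def cqError (P : Measure E2) (S : Set E2) (n : ℕ) : ℝ :=
  sInf {v : ℝ | ∃ α : Set E2, α ⊆ S ∧ α.Finite ∧ 1 ≤ α.ncard ∧ α.ncard ≤ n ∧
    v = cDistortion P α}

/-- `α` is an optimal set of `n` points for `P` with constraint `S`: it is an admissible set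
attaining the `n`th constrained quantization error. -/
def IsOptimalNSet (P : Measure E2) (S : Set E2) (n : ℕ) (α : Set E2) : Prop :=
  α ⊆ S ∧ α.Finite ∧ 1 ≤ α.ncard ∧ α.ncard ≤ n ∧ cDistortion P α = cqError P S n

/-- The uniform probability distribution on the interval `[a, b]`. -/
def uniformIccM (a b : ℝ) : Measure ℝ :=
  (ENNReal.ofReal (b - a))⁻¹ • volume.restrict (Icc a b)

/-- The point of the line `y = m x + c` with abscissa `t`. -/
def segPt (m c t : ℝ) : E2 := cpt t (m * t + c)

/-! For `(a, b)` on the unit circle, `‖(t, -1/2) - (a, b)‖² = t² + 5/4 + (b - 2at)`, so the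
distortion of a pair of points is `3/2` plus the mean over the chord `[-r, r]`, `r = √3/2`, of the
minimum of two affine functions of `t`. That minimum follows one of them left of a crossing point
`m` and the other right of it. With `p = r + m` and `q = r - m`, the two pieces contribute `p` and
`q` times values `b - a s` with `|s| = q`, resp. `|s| = p`, which Cauchy–Schwarz bounds below by
`-√(1 + q²)`, resp. `-√(1 + p²)`. Finally `p √(1 + q²) + q √(1 + p²) ≤ (p + q) √(1 + pq) ≤
2r √(1 + r²)`, with equality at `m = 0`, attained by the symmetric pair of the theorem. -/

theorem ciInf_subtype_pair {α β : Type*} [ConditionallyCompleteLattice β] (f : α → β) (p q : α) :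
    ⨅ a : ({p, q} : Set α), f a = f p ⊓ f q := by
  rw [← sInf_image', image_pair, csInf_pair]

theorem Set.exists_eq_pair_of_ncard_le_two {α : Type*} {s : Set α} (h₁ : 1 ≤ s.ncard)
    (h₂ : s.ncard ≤ 2) : ∃ p q, s = {p, q} := by
  obtain h | h : s.ncard = 1 ∨ s.ncard = 2 := by omega
  · obtain ⟨p, rfl⟩ := ncard_eq_one.1 h
    exact ⟨p, p, (pair_eq_singleton p).symm⟩
  · obtain ⟨p, q, -, rfl⟩ := ncard_eq_two.1 h
    exact ⟨p, q, rfl⟩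

theorem cos_two_mul_arctan (x : ℝ) : cos (2 * arctan x) = (1 - x ^ 2) / (1 + x ^ 2) := by
  rw [cos_two_mul, cos_sq_arctan]
  field_simp
  ring

theorem sin_two_mul_arctan (x : ℝ) : sin (2 * arctan x) = 2 * x / (1 + x ^ 2) := by
  rw [sin_two_mul, sin_arctan, cos_arctan]
  field_simp
  rw [sq_sqrt (by positivity)]

section Crossing

variable {f g : ℝ → ℝ} {l r : ℝ}

theorem integral_min_eq_add_of_crossing (hf : Continuous f) (hg : Continuous g) {m : ℝ}
    (hlm : l ≤ m) (hmr : m ≤ r) (hleft : ∀ t ∈ Ioo l m, g t ≤ f t)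
    (hright : ∀ t ∈ Ioo m r, f t ≤ g t) :
    ∫ t in l..r, min (f t) (g t) = (∫ t in l..m, g t) + ∫ t in m..r, f t := by
  have hint := (hf.min hg).intervalIntegrable (μ := volume)
  rw [← intervalIntegral.integral_add_adjacent_intervals (hint l m) (hint m r)]
  congr 1
  · exact intervalIntegral.integral_congr_Ioo_of_le hlm fun t ht => min_eq_right (hleft t ht)
  · exact intervalIntegral.integral_congr_Ioo_of_le hmr fun t ht => min_eq_left (hright t ht)

theorem exists_integral_min_eq_add (hf : Continuous f) (hg : Continuous g) (hlr : l ≤ r)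
    (hanti : AntitoneOn (f - g) (Icc l r)) :
    ∃ m ∈ Icc l r, ∫ t in l..r, min (f t) (g t) = (∫ t in l..m, g t) + ∫ t in m..r, f t := by
  have hl : l ∈ Icc l r := left_mem_Icc.2 hlr
  have hr : r ∈ Icc l r := right_mem_Icc.2 hlr
  by_cases h_right : 0 ≤ (f - g) r
  · refine ⟨r, hr, integral_min_eq_add_of_crossing hf hg hlr le_rfl (fun t ht => ?_) (by simp)⟩
    have := hanti (Ioo_subset_Icc_self ht) hr ht.2.le
    simp only [Pi.sub_apply] at this h_right
    linarith
  by_cases h_left : (f - g) l ≤ 0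
  · refine ⟨l, hl, integral_min_eq_add_of_crossing hf hg le_rfl hlr (by simp) (fun t ht => ?_)⟩
    have := hanti hl (Ioo_subset_Icc_self ht) ht.1.le
    simp only [Pi.sub_apply] at this h_left
    linarith
  obtain ⟨m, hm, hm0⟩ := intermediate_value_Icc' hlr ((hf.sub hg).continuousOn)
    ⟨(not_le.1 h_right).le, (not_le.1 h_left).le⟩
  refine ⟨m, hm, integral_min_eq_add_of_crossing hf hg hm.1 hm.2 (fun t ht => ?_) (fun t ht => ?_)⟩
  · have := hanti ⟨ht.1.le, ht.2.le.trans hm.2⟩ hm ht.2.le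
    simp only [Pi.sub_apply] at this hm0
    linarith
  · have := hanti hm ⟨hm.1.trans ht.1.le, ht.2.le⟩ ht.1.le
    simp only [Pi.sub_apply] at this hm0
    linarith

end Crossing

theorem integral_affine (a b l m : ℝ) :
    ∫ t in l..m, (b - 2 * a * t) = (m - l) * (b - a * (l + m)) := by
  rw [intervalIntegral.integral_sub intervalIntegrable_const
      (intervalIntegral.intervalIntegrable_id.const_mul _),
    intervalIntegral.integral_const_mul, integral_id, intervalIntegral.integral_const, smul_eq_mul]
  ring

theorem neg_sqrt_one_add_sq_le {a b : ℝ} (h : a ^ 2 + b ^ 2 = 1) (s : ℝ) :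
    -√(1 + s ^ 2) ≤ b - a * s :=
  neg_le_of_abs_le <| abs_le_sqrt <| by nlinarith [sq_nonneg (a + b * s)]

theorem mul_sqrt_add_mul_sqrt_le {p q : ℝ} (hp : 0 ≤ p) (hq : 0 ≤ q) :
    p * √(1 + q ^ 2) + q * √(1 + p ^ 2) ≤ (p + q) * √(1 + p * q) := by
  have hA := sq_sqrt (by positivity : (0:ℝ) ≤ 1 + q ^ 2)
  have hB := sq_sqrt (by positivity : (0:ℝ) ≤ 1 + p ^ 2)
  have hC := sq_sqrt (by positivity : (0:ℝ) ≤ 1 + p * q)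
  refine le_of_sq_le_sq ?_ (by positivity)
  -- `(pA + qB)² ≤ (p + q)(pA² + qB²)` and `pA² + qB² = (p + q)(1 + pq)`
  nlinarith [mul_nonneg (mul_nonneg hp hq) (sq_nonneg (√(1 + q ^ 2) - √(1 + p ^ 2)))]

theorem neg_le_integral_min_affine {a₁ b₁ a₂ b₂ r : ℝ} (h₁ : a₁ ^ 2 + b₁ ^ 2 = 1)
    (h₂ : a₂ ^ 2 + b₂ ^ 2 = 1) (hr : 0 ≤ r) :
    -(2 * r * √(1 + r ^ 2)) ≤ ∫ t in -r..r, min (b₁ - 2 * a₁ * t) (b₂ - 2 * a₂ * t) := by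
  wlog ha : a₂ ≤ a₁ generalizing a₁ b₁ a₂ b₂
  · simpa only [min_comm] using this h₂ h₁ (le_of_not_ge ha)
  obtain ⟨m, hm, hsplit⟩ := exists_integral_min_eq_add (l := -r) (r := r)
    (f := fun t => b₁ - 2 * a₁ * t) (g := fun t => b₂ - 2 * a₂ * t) (by fun_prop) (by fun_prop)
    (by linarith) fun s _ t _ hst => by simp only [Pi.sub_apply]; nlinarith
  rw [hsplit, integral_affine, integral_affine]
  have hp : 0 ≤ m + r := by linarith [hm.1]
  have hq : 0 ≤ r - m := by linarith [hm.2]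
  have left : -((m + r) * √(1 + (r - m) ^ 2)) ≤ (m - -r) * (b₂ - a₂ * (-r + m)) := by
    have := mul_le_mul_of_nonneg_left (neg_sqrt_one_add_sq_le h₂ (m - r)) hp
    rw [← neg_sub, neg_sq, mul_neg] at this
    linarith
  have right : -((r - m) * √(1 + (m + r) ^ 2)) ≤ (r - m) * (b₁ - a₁ * (m + r)) := by
    simpa only [mul_neg] using mul_le_mul_of_nonneg_left (neg_sqrt_one_add_sq_le h₁ (m + r)) hq
  have hpq : √(1 + (m + r) * (r - m)) ≤ √(1 + r ^ 2) := sqrt_le_sqrt (by nlinarith [sq_nonneg m])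
  nlinarith [mul_sqrt_add_mul_sqrt_le hp hq,
    mul_le_mul_of_nonneg_left hpq (by linarith : 0 ≤ 2 * r)]

theorem integral_min_affine_reflect {a : ℝ} (b : ℝ) {r : ℝ} (ha : 0 ≤ a) (hr : 0 ≤ r) :
    ∫ t in -r..r, min (b - 2 * -a * t) (b - 2 * a * t) = 2 * r * (b - a * r) := by
  simp_rw [min_comm (b - 2 * -a * _)]
  rw [integral_min_eq_add_of_crossing (by fun_prop) (by fun_prop) (by linarith) hr
    (fun t ht => by nlinarith [ht.2]) (fun t ht => by nlinarith [ht.1]),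
    integral_affine, integral_affine]
  ring

theorem isOptimalNSet_of_forall_le {P : Measure E2} {S α : Set E2} {n : ℕ} (hαS : α ⊆ S)
    (hα : α.Finite) (h₁ : 1 ≤ α.ncard) (hn : α.ncard ≤ n)
    (hle : ∀ β ⊆ S, β.Finite → 1 ≤ β.ncard → β.ncard ≤ n → cDistortion P α ≤ cDistortion P β) :
    IsOptimalNSet P S n α ∧ cqError P S n = cDistortion P α := by
  have hV : cqError P S n = cDistortion P α := by
    refine IsLeast.csInf_eq ⟨⟨α, hαS, hα, h₁, hn, rfl⟩, ?_⟩
    rintro _ ⟨β, hβS, hβ, hβ₁, hβn, rfl⟩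
    exact hle β hβS hβ hβ₁ hβn
  exact ⟨⟨hαS, hα, h₁, hn, hV.symm⟩, hV⟩

theorem cDistortion_map_pair {μ : Measure ℝ} {φ : ℝ → E2} (hφ : Measurable φ) (p q : E2) :
    cDistortion (μ.map φ) {p, q} = ∫ t, min (dist (φ t) p ^ 2) (dist (φ t) q ^ 2) ∂μ := by
  have hmin : (fun x : E2 => ⨅ a : ({p, q} : Set E2), dist x a ^ 2) =
      fun x => min (dist x p ^ 2) (dist x q ^ 2) :=
    funext fun x => ciInf_subtype_pair (fun a => dist x a ^ 2) p q
  rw [cDistortion, hmin,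
    integral_map hφ.aemeasurable (by fun_prop : Continuous _).aestronglyMeasurable]

theorem integral_uniformIccM {a b : ℝ} (hab : a ≤ b) (f : ℝ → ℝ) :
    ∫ t, f t ∂uniformIccM a b = (b - a)⁻¹ * ∫ t in a..b, f t := by
  rw [uniformIccM, integral_smul_measure, ENNReal.toReal_inv,
    ENNReal.toReal_ofReal (sub_nonneg.2 hab), intervalIntegral.integral_of_le hab,
    integral_Icc_eq_integral_Ioc, smul_eq_mul]

@[simp] theorem cpt_apply_zero (x y : ℝ) : cpt x y 0 = x := rfl
@[simp] theorem cpt_apply_one (x y : ℝ) : cpt x y 1 = y := rfl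

theorem dist_cpt_sq (x y : ℝ) (p : E2) :
    dist (cpt x y) p ^ 2 = (x - p 0) ^ 2 + (y - p 1) ^ 2 := by
  rw [EuclideanSpace.dist_eq, sq_sqrt (by positivity), Fin.sum_univ_two, Real.dist_eq,
    Real.dist_eq, sq_abs, sq_abs, cpt_apply_zero, cpt_apply_one]

theorem mem_sphere_iff_sq_add_sq {p : E2} :
    p ∈ Metric.sphere (0 : E2) 1 ↔ p 0 ^ 2 + p 1 ^ 2 = 1 := by
  rw [mem_sphere_zero_iff_norm, EuclideanSpace.norm_eq, sqrt_eq_one, Fin.sum_univ_two,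
    Real.norm_eq_abs, Real.norm_eq_abs, sq_abs, sq_abs]

def chordMeasure : Measure E2 :=
  Measure.map (fun x : ℝ => cpt x (-(1 / 2))) (uniformIccM (-(√3 / 2)) (√3 / 2))

theorem measurable_cpt_left (y : ℝ) : Measurable fun x : ℝ => cpt x y := by
  unfold cpt
  fun_prop

theorem cDistortion_chordMeasure_pair {p q : E2} (hp : p ∈ Metric.sphere (0 : E2) 1)
    (hq : q ∈ Metric.sphere (0 : E2) 1) :
    cDistortion chordMeasure {p, q} =
      3 / 2 + (√3)⁻¹ * ∫ t in -(√3 / 2)..√3 / 2, min (p 1 - 2 * p 0 * t) (q 1 - 2 * q 0 * t) := by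
  have h3 : √3 ^ 2 = 3 := sq_sqrt (by norm_num)
  have hdist (t : ℝ) : min (dist (cpt t (-(1 / 2))) p ^ 2) (dist (cpt t (-(1 / 2))) q ^ 2) =
      (t ^ 2 + 5 / 4) + min (p 1 - 2 * p 0 * t) (q 1 - 2 * q 0 * t) := by
    rw [dist_cpt_sq, dist_cpt_sq, ← min_add_add_left]
    congr 1
    · linear_combination mem_sphere_iff_sq_add_sq.1 hp
    · linear_combination mem_sphere_iff_sq_add_sq.1 hq
  rw [chordMeasure, cDistortion_map_pair (measurable_cpt_left _),
    integral_uniformIccM (by linarith [sqrt_nonneg 3])]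
  simp_rw [hdist]
  have hquad : ∫ t in -(√3 / 2)..√3 / 2, (t ^ 2 + 5 / 4) = √3 * (3 / 2) := by
    rw [intervalIntegral.integral_add (intervalIntegral.intervalIntegrable_pow 2)
        intervalIntegrable_const, integral_pow, intervalIntegral.integral_const, smul_eq_mul]
    linear_combination (√3 / 12) * h3
  rw [intervalIntegral.integral_add
      ((by fun_prop : Continuous fun t : ℝ => t ^ 2 + 5 / 4).intervalIntegrable _ _)
      ((by fun_prop : Continuous fun t => min (p 1 - 2 * p 0 * t) (q 1 - 2 * q 0 * t)).intervalIntegrable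
        _ _),
    hquad, show √3 / 2 - -(√3 / 2) = √3 by ring, mul_add, inv_mul_cancel_left₀ (by positivity)]

theorem sqrt_one_add_sq_half_sqrt_three : √(1 + (√3 / 2) ^ 2) = √7 / 2 := by
  rw [div_pow, sq_sqrt (by norm_num : (0 : ℝ) ≤ 3),
    sqrt_eq_iff_mul_self_eq (by norm_num) (by positivity)]
  ring_nf
  rw [sq_sqrt (by norm_num)]
  norm_num

theorem le_cDistortion_chordMeasure_pair {p q : E2} (hp : p ∈ Metric.sphere (0 : E2) 1)
    (hq : q ∈ Metric.sphere (0 : E2) 1) : (3 - √7) / 2 ≤ cDistortion chordMeasure {p, q} := by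
  have hbound := neg_le_integral_min_affine (mem_sphere_iff_sq_add_sq.1 hp)
    (mem_sphere_iff_sq_add_sq.1 hq) (by positivity : 0 ≤ √3 / 2)
  rw [sqrt_one_add_sq_half_sqrt_three] at hbound
  rw [cDistortion_chordMeasure_pair hp hq]
  have h3 : (0 : ℝ) < √3 := by positivity
  have := mul_le_mul_of_nonneg_left hbound (inv_nonneg.2 h3.le)
  have hval : (√3)⁻¹ * -(2 * (√3 / 2) * (√7 / 2)) = -(√7 / 2) := by field_simp
  linarith

def optimalPair : Set E2 :=
  {cpt (-(√3 * √7 / 7)) (-(2 * √7 / 7)), cpt (√3 * √7 / 7) (-(2 * √7 / 7))}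

theorem optimalPair_subset_sphere : optimalPair ⊆ Metric.sphere (0 : E2) 1 := by
  have h : (√3 * √7 / 7) ^ 2 + (-(2 * √7 / 7)) ^ 2 = 1 := by
    rw [div_pow, mul_pow, neg_sq, div_pow, mul_pow, sq_sqrt (by norm_num), sq_sqrt (by norm_num)]
    norm_num
  rintro _ (rfl | rfl) <;>
    rw [mem_sphere_iff_sq_add_sq, cpt_apply_zero, cpt_apply_one] <;> simpa only [neg_sq] using h

theorem ncard_optimalPair : optimalPair.ncard = 2 := by
  refine ncard_pair fun h => ?_
  have := congrArg (· 0) h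
  simp only [cpt_apply_zero] at this
  linarith [show 0 < √3 * √7 / 7 by positivity]

theorem cDistortion_chordMeasure_optimalPair :
    cDistortion chordMeasure optimalPair = (3 - √7) / 2 := by
  rw [optimalPair, cDistortion_chordMeasure_pair (optimalPair_subset_sphere (by simp [optimalPair]))
    (optimalPair_subset_sphere (by simp [optimalPair]))]
  simp only [cpt_apply_zero, cpt_apply_one]
  rw [integral_min_affine_reflect _ (by positivity) (by positivity)]
  field_simp
  linear_combination (-√7) * sq_sqrt (by norm_num : (0 : ℝ) ≤ 3)

theorem sq_half_sqrt_three_add_half_sqrt_seven :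
    (√3 / 2 + √7 / 2) ^ 2 = 5 / 2 + √3 * √7 / 2 := by
  linear_combination (1 / 4) * sq_sqrt (by norm_num : (0 : ℝ) ≤ 3) +
    (1 / 4) * sq_sqrt (by norm_num : (0 : ℝ) ≤ 7)

theorem cos_two_mul_arctan_half_sqrt_three_add_half_sqrt_seven :
    cos (2 * arctan (√3 / 2 + √7 / 2)) = -(√3 * √7 / 7) := by
  rw [cos_two_mul_arctan, sq_half_sqrt_three_add_half_sqrt_seven, div_eq_iff (by positivity)]
  have hg : (√3 * √7) ^ 2 = 21 := by
    rw [mul_pow, sq_sqrt (by norm_num), sq_sqrt (by norm_num)]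
    norm_num
  linear_combination (1 / 14) * hg

theorem sin_two_mul_arctan_half_sqrt_three_add_half_sqrt_seven :
    sin (2 * arctan (√3 / 2 + √7 / 2)) = 2 * √7 / 7 := by
  rw [sin_two_mul_arctan, sq_half_sqrt_three_add_half_sqrt_seven, div_eq_iff (by positivity)]
  linear_combination (-√3 / 7) * sq_sqrt (by norm_num : (0 : ℝ) ≤ 7)

/-- For the uniform distribution on the chord `{(x, -1/2) : -√3/2 ≤ x ≤ √3/2}` of the unit
circle, with constraint the unit circle: the set `{(cos θ₁, sin θ₁), (cos θ₂, sin θ₂)}` with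
`θ₁ = 2π - 2 arctan(√3/2 + √7/2)` and `θ₂ = π + 2 arctan(√3/2 + √7/2)` is an optimal set of two
points, and the second constrained quantization error is `V₂ = (3 - √7)/2`. -/
theorem chord_circle_constraint_two_points :
    IsOptimalNSet
      (Measure.map (fun x : ℝ => cpt x (-(1/2)))
        (uniformIccM (-(Real.sqrt 3 / 2)) (Real.sqrt 3 / 2)))
      (Metric.sphere (0 : E2) 1) 2
      {cpt (Real.cos (2 * π - 2 * Real.arctan (Real.sqrt 3 / 2 + Real.sqrt 7 / 2)))
          (Real.sin (2 * π - 2 * Real.arctan (Real.sqrt 3 / 2 + Real.sqrt 7 / 2))),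
        cpt (Real.cos (π + 2 * Real.arctan (Real.sqrt 3 / 2 + Real.sqrt 7 / 2)))
          (Real.sin (π + 2 * Real.arctan (Real.sqrt 3 / 2 + Real.sqrt 7 / 2)))} ∧
    cqError
      (Measure.map (fun x : ℝ => cpt x (-(1/2)))
        (uniformIccM (-(Real.sqrt 3 / 2)) (Real.sqrt 3 / 2)))
      (Metric.sphere (0 : E2) 1) 2 = (3 - Real.sqrt 7) / 2 := by
  rw [cos_two_pi_sub, sin_two_pi_sub, add_comm π, cos_add_pi, sin_add_pi,
    cos_two_mul_arctan_half_sqrt_three_add_half_sqrt_seven,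
    sin_two_mul_arctan_half_sqrt_three_add_half_sqrt_seven, neg_neg]
  change IsOptimalNSet chordMeasure _ _ optimalPair ∧ cqError chordMeasure _ _ = _
  obtain ⟨hopt, hV⟩ := isOptimalNSet_of_forall_le optimalPair_subset_sphere (by simp [optimalPair])
    (ncard_optimalPair ▸ one_le_two) ncard_optimalPair.le fun β hβS _ h₁ h₂ => by
      obtain ⟨p, q, rfl⟩ := exists_eq_pair_of_ncard_le_two h₁ h₂
      rw [cDistortion_chordMeasure_optimalPair]
      exact le_cDistortion_chordMeasure_pair (hβS (by simp)) (hβS (by simp))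
  exact ⟨hopt, hV.trans cDistortion_chordMeasure_optimalPair⟩
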